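/- Let p, γ, ν be real numbers with 0 < p < 1, let A₀ be a natural number, and let V : ℕ → ℝ satisfy the Bellman recursion V(A) = A − γ + ν + (1−p)·V(A+1) for every natural number A ≥ A₀, together with the growth condition (1−p)^A · V(A) → 0 as A → ∞. Then V(A) = (A − γ + ν)/p + (1−p)/p² for every A ≥ A₀. -/

import Mathlib

/-!
The closed form `f A = (A − γ + ν)/p + (1−p)/p²` satisfies the same recursion as `V`, so the
difference `W = V − f` obeys `W A = (1−p)·W (A+1)`; hence `(1−p)^A · W A` is constant from `A₀`
on. It also tends to `0`, because `(1−p)^A · V A` does by assumption and `(1−p)^A · f A` does as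
an affine function times a geometric sequence. So `W` vanishes from `A₀` on.
-/

open Filter Topology

theorem eq_of_tendsto_of_forall_succ_eq {α : Type*} [TopologicalSpace α] [T2Space α]
    {g : ℕ → α} {N : ℕ} {l : α} (hg : ∀ n, N ≤ n → g (n + 1) = g n)
    (hl : Tendsto g atTop (𝓝 l)) {n : ℕ} (hn : N ≤ n) : g n = l := by
  have hconst : ∀ m, n ≤ m → g m = g n := by
    intro m hm
    induction m, hm using Nat.le_induction with
    | base => rfl
    | succ m hnm ih => rw [hg m (hn.trans hnm), ih]
  exact tendsto_nhds_unique tendsto_const_nhds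
    (hl.congr' (eventually_atTop.2 ⟨n, hconst⟩))

theorem eq_zero_of_forall_eq_mul_succ {K : Type*} [Field K] [TopologicalSpace K] [T2Space K]
    {r : K} (hr : r ≠ 0) {W : ℕ → K} {N : ℕ} (hW : ∀ n, N ≤ n → W n = r * W (n + 1))
    (hlim : Tendsto (fun n ↦ r ^ n * W n) atTop (𝓝 0)) {n : ℕ} (hn : N ≤ n) : W n = 0 := by
  have h : r ^ n * W n = 0 :=
    eq_of_tendsto_of_forall_succ_eq (fun m hm ↦ by rw [hW m hm, pow_succ, mul_assoc]) hlim hn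
  exact (mul_eq_zero.1 h).resolve_left (pow_ne_zero n hr)

theorem tendsto_pow_mul_affine_of_abs_lt_one {r : ℝ} (hr : |r| < 1) (a b : ℝ) :
    Tendsto (fun n : ℕ ↦ r ^ n * (a * n + b)) atTop (𝓝 0) := by
  have h := ((tendsto_self_mul_const_pow_of_abs_lt_one hr).const_mul a).add
    ((tendsto_pow_atTop_nhds_zero_of_abs_lt_one hr).const_mul b)
  simp only [mul_zero, add_zero] at h
  exact h.congr fun n ↦ by ring

theorem bellman_closed_form_step {p : ℝ} (hp : p ≠ 0) (γ ν x : ℝ) :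
    (x - γ + ν) / p + (1 - p) / p ^ 2
      = x - γ + ν + (1 - p) * ((x + 1 - γ + ν) / p + (1 - p) / p ^ 2) := by
  field_simp
  ring

/-- If `V : ℕ → ℝ` satisfies the Bellman recursion
`V(A) = A − γ + ν + (1−p)·V(A+1)` for all `A ≥ A₀`, together with the growth
condition `(1−p)^A · V(A) → 0`, then `V(A) = (A − γ + ν)/p + (1−p)/p²`
for all `A ≥ A₀`. -/
theorem bellman_recursion_closed_form (p γ ν : ℝ) (hp : 0 < p) (hp1 : p < 1)
    (A₀ : ℕ) (V : ℕ → ℝ)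
    (hV : ∀ A : ℕ, A₀ ≤ A → V A = (A : ℝ) - γ + ν + (1 - p) * V (A + 1))
    (hgrowth : Filter.Tendsto (fun A : ℕ => (1 - p) ^ A * V A) Filter.atTop (nhds 0)) :
    ∀ A : ℕ, A₀ ≤ A → V A = ((A : ℝ) - γ + ν) / p + (1 - p) / p ^ 2 := by
  set f : ℕ → ℝ := fun A ↦ ((A : ℝ) - γ + ν) / p + (1 - p) / p ^ 2 with hf
  have hdiff : ∀ A, A₀ ≤ A → V A - f A = (1 - p) * (V (A + 1) - f (A + 1)) := by
    intro A hA
    rw [hV A hA, hf]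
    push_cast
    rw [bellman_closed_form_step hp.ne' γ ν A]
    ring
  have hf_lim : Tendsto (fun A ↦ (1 - p) ^ A * f A) atTop (𝓝 0) :=
    (tendsto_pow_mul_affine_of_abs_lt_one (r := 1 - p) (abs_lt.2 ⟨by linarith, by linarith⟩) (1 / p)
      ((ν - γ) / p + (1 - p) / p ^ 2)).congr fun A ↦ by simp only [hf]; ring
  have hdiff_lim : Tendsto (fun A ↦ (1 - p) ^ A * (V A - f A)) atTop (𝓝 0) := by
    simpa only [mul_sub, sub_zero] using hgrowth.sub hf_lim
  intro A hA
  exact sub_eq_zero.1 (eq_zero_of_forall_eq_mul_succ (by linarith) hdiff hdiff_lim hA)
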